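/- Preservation theorem: If M and M' are J-stuttering simulation equivalent models (M ≤_{Jss} M' and M' ≤_{Jss} M), then for every ACTL*K_{-X}^J formula φ (a formula whose epistemic modalities and indexed atoms refer only to agents in J), (M, ι) ⊨ φ iff (M', ι') ⊨ φ. -/
import Mathlib


-- State and path formulas of ACTL*K without next, in negation normal form,
-- with atoms and epistemic modalities indexed by agents in `A`.
mutual
inductive SForm (AP A : Type) : Type where
  | atom : AP → A → SForm AP A
  | natom : AP → A → SForm AP A
  | sand : SForm AP A → SForm AP A → SForm AP A
  | sor : SForm AP A → SForm AP A → SForm AP A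
  | know : A → SForm AP A → SForm AP A
  | aall : PForm AP A → SForm AP A

inductive PForm (AP A : Type) : Type where
  | ofState : SForm AP A → PForm AP A
  | pand : PForm AP A → PForm AP A → PForm AP A
  | por : PForm AP A → PForm AP A → PForm AP A
  | puntil : PForm AP A → PForm AP A → PForm AP A
  | prelease : PForm AP A → PForm AP A → PForm AP A
end

-- Renaming of agent indices in a formula.
mutual
def renameS {AP A B : Type} (f : A → B) : SForm AP A → SForm AP B
  | .atom p i => .atom p (f i)
  | .natom p i => .natom p (f i)
  | .sand φ ψ => .sand (renameS f φ) (renameS f ψ)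
  | .sor φ ψ => .sor (renameS f φ) (renameS f ψ)
  | .know i φ => .know (f i) (renameS f φ)
  | .aall φ => .aall (renameP f φ)

def renameP {AP A B : Type} (f : A → B) : PForm AP A → PForm AP B
  | .ofState φ => .ofState (renameS f φ)
  | .pand φ ψ => .pand (renameP f φ) (renameP f ψ)
  | .por φ ψ => .por (renameP f φ) (renameP f ψ)
  | .puntil φ ψ => .puntil (renameP f φ) (renameP f ψ)
  | .prelease φ ψ => .prelease (renameP f φ) (renameP f ψ)
end

/-- A model: global states, a transition relation, an initial state,
epistemic indistinguishability relations, and an indexed valuation. -/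
structure Model (AP A : Type) where
  G : Type
  R : G → G → Prop
  init : G
  eqv : A → G → G → Prop
  val : G → AP → A → Prop

def Model.ValidPath {AP A : Type} (M : Model AP A) (π : ℕ → M.G) : Prop :=
  ∀ j, M.R (π j) (π (j + 1))

def shiftPath {G : Type} (π : ℕ → G) (i : ℕ) : ℕ → G := fun j => π (i + j)

-- Satisfaction of state formulas at states and of path formulas on paths.
mutual
def ssat {AP A : Type} (M : Model AP A) : SForm AP A → M.G → Prop
  | .atom p i, g => M.val g p i
  | .natom p i, g => ¬ M.val g p i
  | .sand φ ψ, g => ssat M φ g ∧ ssat M ψ g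
  | .sor φ ψ, g => ssat M φ g ∨ ssat M ψ g
  | .know i φ, g => ∀ g', M.eqv i g g' → ssat M φ g'
  | .aall φ, g => ∀ π, M.ValidPath π → π 0 = g → psat M φ π

def psat {AP A : Type} (M : Model AP A) : PForm AP A → (ℕ → M.G) → Prop
  | .ofState φ, π => ssat M φ (π 0)
  | .pand φ ψ, π => psat M φ π ∧ psat M ψ π
  | .por φ ψ, π => psat M φ π ∨ psat M ψ π
  | .puntil φ ψ, π => ∃ i, psat M ψ (shiftPath π i) ∧ ∀ j < i, psat M φ (shiftPath π j)
  | .prelease φ ψ, π => ∀ i, (∀ j < i, ¬ psat M φ (shiftPath π j)) → psat M ψ (shiftPath π i)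
end

-- A formula refers only to agents in `J` if all its indexed atoms and
-- epistemic modalities use indices in `J`.
mutual
def usesOnlyS {AP A : Type} (J : Set A) : SForm AP A → Prop
  | .atom _ i => i ∈ J
  | .natom _ i => i ∈ J
  | .sand φ ψ => usesOnlyS J φ ∧ usesOnlyS J ψ
  | .sor φ ψ => usesOnlyS J φ ∧ usesOnlyS J ψ
  | .know i φ => i ∈ J ∧ usesOnlyS J φ
  | .aall φ => usesOnlyP J φ

def usesOnlyP {AP A : Type} (J : Set A) : PForm AP A → Prop
  | .ofState φ => usesOnlyS J φ
  | .pand φ ψ => usesOnlyP J φ ∧ usesOnlyP J ψ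
  | .por φ ψ => usesOnlyP J φ ∧ usesOnlyP J ψ
  | .puntil φ ψ => usesOnlyP J φ ∧ usesOnlyP J ψ
  | .prelease φ ψ => usesOnlyP J φ ∧ usesOnlyP J ψ
end

/-- `J`-stuttering simulation between two models over the same agent index
set: initial states are related; related states have matching epistemic
successors for agents in `J` and agree on atoms indexed by `J`; and every
path of the first model is matched by a path of the second together with
partitions into finite nonempty blocks (given by the strictly monotone block
boundary functions `b`, `b'` starting at `0`) such that all states of
corresponding blocks are related. -/
def StutterSim {AP A : Type} (J : Set A) (M M' : Model AP A)
    (sim : M.G → M'.G → Prop) : Prop :=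
  sim M.init M'.init ∧
  ∀ g g', sim g g' →
    ((∀ i ∈ J, ∀ g1, M.eqv i g g1 → ∃ g1', M'.eqv i g' g1' ∧ sim g1 g1') ∧
     (∀ p, ∀ i ∈ J, (M.val g p i ↔ M'.val g' p i)) ∧
     (∀ π, M.ValidPath π → π 0 = g →
        ∃ π', M'.ValidPath π' ∧ π' 0 = g' ∧
          ∃ b b' : ℕ → ℕ, b 0 = 0 ∧ b' 0 = 0 ∧ StrictMono b ∧ StrictMono b' ∧
            ∀ j m m', b j ≤ m → m < b (j + 1) → b' j ≤ m' → m' < b' (j + 1) →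
              sim (π m) (π' m')))

-- ===== Auxiliary development =====

/-- Two paths are matched by block partitions all of whose corresponding
states are related by `sim`. -/
def Matched {AP A : Type} (M M' : Model AP A) (sim : M.G → M'.G → Prop)
    (π : ℕ → M.G) (π' : ℕ → M'.G) : Prop :=
  ∃ b b' : ℕ → ℕ, b 0 = 0 ∧ b' 0 = 0 ∧ StrictMono b ∧ StrictMono b' ∧
    ∀ j m m', b j ≤ m → m < b (j + 1) → b' j ≤ m' → m' < b' (j + 1) →
      sim (π m) (π' m')

lemma exists_block (b : ℕ → ℕ) (hb : StrictMono b) (h0 : b 0 = 0) (m : ℕ) :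
    ∃ j, b j ≤ m ∧ m < b (j + 1) := by
  classical
  set j := Nat.findGreatest (fun k => b k ≤ m) (m + 1) with hj
  have hspec : b j ≤ m :=
    Nat.findGreatest_spec (P := fun k => b k ≤ m) (Nat.zero_le _) (show b 0 ≤ m by omega)
  refine ⟨j, hspec, ?_⟩
  by_contra h
  push_neg at h
  have h3 : j + 1 ≤ b (j + 1) := hb.le_apply
  exact Nat.findGreatest_is_greatest (P := fun k => b k ≤ m)
    (Nat.lt_succ_self j) (by omega) h

lemma blocks_shift {AP A : Type} {M M' : Model AP A} {sim : M.G → M'.G → Prop}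
    {π : ℕ → M.G} {π' : ℕ → M'.G} {b b' : ℕ → ℕ}
    (hb : StrictMono b) (hb' : StrictMono b')
    (H : ∀ j m m', b j ≤ m → m < b (j + 1) → b' j ≤ m' → m' < b' (j + 1) →
      sim (π m) (π' m'))
    {j m m'} (hm1 : b j ≤ m) (hm2 : m < b (j + 1))
    (hm'1 : b' j ≤ m') (hm'2 : m' < b' (j + 1)) :
    Matched M M' sim (shiftPath π m) (shiftPath π' m') := by
  refine ⟨fun k => b (j + k) - m, fun k => b' (j + k) - m',
    show b (j + 0) - m = 0 by simp; omega,
    show b' (j + 0) - m' = 0 by simp; omega, ?_, ?_, ?_⟩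
  · apply strictMono_nat_of_lt_succ
    intro k
    show b (j + k) - m < b (j + k + 1) - m
    have a1 : b (j + k) < b (j + k + 1) := hb (by omega)
    have a2 : b (j + 1) ≤ b (j + k + 1) := hb.monotone (by omega)
    omega
  · apply strictMono_nat_of_lt_succ
    intro k
    show b' (j + k) - m' < b' (j + k + 1) - m'
    have a1 : b' (j + k) < b' (j + k + 1) := hb' (by omega)
    have a2 : b' (j + 1) ≤ b' (j + k + 1) := hb'.monotone (by omega)
    omega
  · intro k n n' h1 h2 h3 h4
    have h1' : b (j + k) - m ≤ n := h1
    have h2' : n < b (j + k + 1) - m := h2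
    have h3' : b' (j + k) - m' ≤ n' := h3
    have h4' : n' < b' (j + k + 1) - m' := h4
    have a1 : b (j + 1) ≤ b (j + k + 1) := hb.monotone (by omega)
    have a2 : b j ≤ b (j + k) := hb.monotone (by omega)
    have a1' : b' (j + 1) ≤ b' (j + k + 1) := hb'.monotone (by omega)
    have a2' : b' j ≤ b' (j + k) := hb'.monotone (by omega)
    have := H (j + k) (m + n) (m' + n') (by omega) (by omega) (by omega) (by omega)
    simpa [shiftPath] using this

lemma validPath_shift {AP A : Type} (M : Model AP A) {π : ℕ → M.G}
    (h : M.ValidPath π) (i : ℕ) : M.ValidPath (shiftPath π i) := by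
  intro j
  have := h (i + j)
  simpa [shiftPath, Nat.add_assoc] using this

mutual
theorem keyS {AP A : Type} {J : Set A} {M M' : Model AP A} {sim : M.G → M'.G → Prop}
    (hs : StutterSim J M M' sim) :
    ∀ φ : SForm AP A, usesOnlyS J φ → ∀ g g', sim g g' → ssat M' φ g' → ssat M φ g
  | .atom p i, h, g, g', hgg, hsat => ((hs.2 g g' hgg).2.1 p i h).mpr hsat
  | .natom p i, h, g, g', hgg, hsat => fun hv => hsat (((hs.2 g g' hgg).2.1 p i h).mp hv)
  | .sand φ ψ, h, g, g', hgg, hsat =>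
      ⟨keyS hs φ h.1 g g' hgg hsat.1, keyS hs ψ h.2 g g' hgg hsat.2⟩
  | .sor φ ψ, h, g, g', hgg, hsat =>
      hsat.elim (fun hl => Or.inl (keyS hs φ h.1 g g' hgg hl))
        (fun hr => Or.inr (keyS hs ψ h.2 g g' hgg hr))
  | .know i φ, h, g, g', hgg, hsat => fun g1 heq => by
      obtain ⟨g1', heq', hsim'⟩ := (hs.2 g g' hgg).1 i h.1 g1 heq
      exact keyS hs φ h.2 g1 g1' hsim' (hsat g1' heq')
  | .aall φ, h, g, g', hgg, hsat => fun π hπ hπ0 => by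
      obtain ⟨π', hπ', hπ'0, b, b', hb0, hb'0, hb, hb', H⟩ :=
        (hs.2 g g' hgg).2.2 π hπ hπ0
      exact keyP hs φ h π π' ⟨b, b', hb0, hb'0, hb, hb', H⟩ (hsat π' hπ' hπ'0)

theorem keyP {AP A : Type} {J : Set A} {M M' : Model AP A} {sim : M.G → M'.G → Prop}
    (hs : StutterSim J M M' sim) :
    ∀ φ : PForm AP A, usesOnlyP J φ → ∀ (π : ℕ → M.G) (π' : ℕ → M'.G),
      Matched M M' sim π π' → psat M' φ π' → psat M φ π
  | .ofState φ, h, π, π', hm, hsat => by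
      obtain ⟨b, b', hb0, hb'0, hb, hb', H⟩ := hm
      have h1 : b 0 < b 1 := hb (by omega)
      have h2 : b' 0 < b' 1 := hb' (by omega)
      have g1 : b 0 ≤ 0 := hb0.le
      have g2 : 0 < b 1 := by omega
      have g3 : b' 0 ≤ 0 := hb'0.le
      have g4 : 0 < b' 1 := by omega
      exact keyS hs φ h (π 0) (π' 0) (H 0 0 0 g1 g2 g3 g4) hsat
  | .pand φ ψ, h, π, π', hm, hsat =>
      ⟨keyP hs φ h.1 π π' hm hsat.1, keyP hs ψ h.2 π π' hm hsat.2⟩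
  | .por φ ψ, h, π, π', hm, hsat =>
      hsat.elim (fun hl => Or.inl (keyP hs φ h.1 π π' hm hl))
        (fun hr => Or.inr (keyP hs ψ h.2 π π' hm hr))
  | .puntil φ ψ, h, π, π', hm, hsat => by
      obtain ⟨b, b', hb0, hb'0, hb, hb', H⟩ := hm
      obtain ⟨i', hψ, hφ⟩ := hsat
      obtain ⟨j0, hj1, hj2⟩ := exists_block b' hb' hb'0 i'
      refine ⟨b j0, ?_, ?_⟩
      · exact keyP hs ψ h.2 _ _
          (blocks_shift hb hb' H (le_refl _) (hb (by omega)) hj1 hj2) hψ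
      · intro m hm
        obtain ⟨k, hk1, hk2⟩ := exists_block b hb hb0 m
        have hkj : k < j0 := by
          by_contra hc
          have : b j0 ≤ b k := hb.monotone (by omega)
          omega
        have hbk : b' k < i' := lt_of_lt_of_le (hb' hkj) hj1
        exact keyP hs φ h.1 _ _
          (blocks_shift hb hb' H hk1 hk2 (le_refl _) (hb' (by omega))) (hφ (b' k) hbk)
  | .prelease φ ψ, h, π, π', hm, hsat => by
      obtain ⟨b, b', hb0, hb'0, hb, hb', H⟩ := hm
      intro i hno
      obtain ⟨j0, hj1, hj2⟩ := exists_block b hb hb0 i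
      refine keyP hs ψ h.2 _ _
        (blocks_shift hb hb' H hj1 hj2 (le_refl _) (hb' (by omega))) ?_
      apply hsat
      intro j' hj' hsat'
      obtain ⟨k, hk1, hk2⟩ := exists_block b' hb' hb'0 j'
      have hkj : k < j0 := by
        by_contra hc
        have : b' j0 ≤ b' k := hb'.monotone (by omega)
        omega
      have hbk : b k < i := lt_of_lt_of_le (hb hkj) hj1
      exact hno (b k) hbk
        (keyP hs φ h.1 _ _
          (blocks_shift hb hb' H (le_refl _) (hb (by omega)) hk1 hk2) hsat')
end


/-- Preservation theorem: if `M` and `M'` are `J`-stuttering simulation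
equivalent (`M ≤_{Jss} M'` and `M' ≤_{Jss} M`), then for every
ACTL*K_{-X}^J formula `φ` (referring only to agents in `J`),
`(M, ι) ⊨ φ` iff `(M', ι') ⊨ φ`. -/
theorem stuttering_equivalence_preserves {AP A : Type} (M M' : Model AP A)
    (J : Set A) (sim : M.G → M'.G → Prop) (sim' : M'.G → M.G → Prop)
    (h1 : StutterSim J M M' sim) (h2 : StutterSim J M' M sim')
    (φ : SForm AP A) (hφ : usesOnlyS J φ) :
    ssat M φ M.init ↔ ssat M' φ M'.init :=
  ⟨fun h => keyS h2 φ hφ M'.init M.init h2.1 h,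
   fun h => keyS h1 φ hφ M.init M'.init h1.1 h⟩
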